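/- Let x : ℝ → ℍ be an integrable function taking values in the real span of {1, i} (i.e. the j- and k-components of x(t) vanish for every t), and define its quaternion Fourier transform X(ν) = ∫ℝ x(t)·exp(−j·2π·ν·t) dt, where exp(θ·j) = cos θ + (sin θ)·j. Then for every ν ∈ ℝ, X(−ν) = −i·X(ν)·i (the i-Hermitian symmetry of the QFT of a ℂᵢ-valued signal). -/

import Mathlib

open Quaternion MeasureTheory

noncomputable section

/-- The imaginary unit `i` of the quaternions. -/
def qi : ℍ[ℝ] := ⟨0, 1, 0, 0⟩

/-- The imaginary unit `j` of the quaternions. -/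
def qj : ℍ[ℝ] := ⟨0, 0, 1, 0⟩

/-- The embedding `ι : ℂ → ℍ` sending `a + b·√(−1)` to `a + b·j`. -/
def iotaC (z : ℂ) : ℍ[ℝ] := ⟨z.re, 0, z.im, 0⟩

/-- The identification `Φ : ℂ² → ℍ`, `Φ(z₁, z₂) = ι(z₁) + i·ι(z₂)`. -/
def PhiMap (z : Fin 2 → ℂ) : ℍ[ℝ] := iotaC (z 0) + qi * iotaC (z 1)

/-- A quaternion is a pure unit quaternion if its real part is `0` and its modulus is `1`. -/
def IsPureUnit (μ : ℍ[ℝ]) : Prop := μ.re = 0 ∧ ‖μ‖ = 1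

/-- The quaternion exponential. -/
def qexp (q : ℍ[ℝ]) : ℍ[ℝ] := NormedSpace.exp q

/-- The Euclidean inner product on `ℍ ≅ ℝ⁴`: `⟨p, q⟩` is the real part of `p·q̄`. -/
def qinner (p q : ℍ[ℝ]) : ℝ := (p * star q).re

/-!
Conjugation `q ↦ i q i⁻¹ = -i q i` is an invertible ℝ-linear map, so it commutes with the Bochner
integral whether or not the integrand is integrable. It fixes the `ℂᵢ`-valued signal `x(t)` and
sends `j` to `-j`, hence turns the kernel `exp(-j·2πνt)` into `exp(-j·2π(-ν)t)`.
-/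

@[simp] lemma re_qi : qi.re = 0 := rfl
@[simp] lemma imI_qi : qi.imI = 1 := rfl
@[simp] lemma imJ_qi : qi.imJ = 0 := rfl
@[simp] lemma imK_qi : qi.imK = 0 := rfl
@[simp] lemma re_qj : qj.re = 0 := rfl
@[simp] lemma imI_qj : qj.imI = 0 := rfl
@[simp] lemma imJ_qj : qj.imJ = 1 := rfl
@[simp] lemma imK_qj : qj.imK = 0 := rfl

lemma qi_ne_zero : qi ≠ 0 := ne_of_apply_ne (·.imI) (by simp)

lemma inv_qi : qi⁻¹ = -qi :=
  inv_eq_of_mul_eq_one_right <| by ext <;> simp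

lemma commute_qi_of_imJ_of_imK {q : ℍ[ℝ]} (hJ : q.imJ = 0) (hK : q.imK = 0) : Commute qi q := by
  ext <;> simp [hJ, hK]

lemma qi_mul_qj_mul_coe_mul_inv (r : ℝ) : qi * (qj * r) * qi⁻¹ = qj * (-r : ℝ) := by
  rw [inv_qi]
  ext <;> simp

lemma qi_mul_qexp_neg_qj_mul_inv (θ : ℝ) :
    qi * qexp (-(qj * θ)) * qi⁻¹ = qexp (-(qj * (-θ : ℝ))) := by
  let : NormedAlgebra ℚ ℍ[ℝ] := .restrictScalars ℚ ℝ ℍ[ℝ]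
  rw [qexp, qexp, ← NormedSpace.exp_conj qi _ qi_ne_zero, mul_neg, neg_mul,
    qi_mul_qj_mul_coe_mul_inv]

section IntegralUnit

variable {α A : Type*} [MeasurableSpace α] {μ : Measure α} [NormedRing A] [NormedAlgebra ℝ A]
  {c : A}

theorem integral_const_mul_of_isUnit (hc : IsUnit c) (f : α → A) :
    ∫ x, c * f x ∂μ = c * ∫ x, f x ∂μ := by
  by_cases hf : Integrable f μ
  · exact integral_const_mul_of_integrable hf
  · rw [integral_undef hf, integral_undef ((integrable_const_mul_iff hc f).not.mpr hf), mul_zero]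

theorem integral_mul_const_of_isUnit (hc : IsUnit c) (f : α → A) :
    ∫ x, f x * c ∂μ = (∫ x, f x ∂μ) * c := by
  by_cases hf : Integrable f μ
  · exact integral_mul_const_of_integrable hf
  · rw [integral_undef hf, integral_undef ((integrable_mul_const_iff hc f).not.mpr hf), zero_mul]

end IntegralUnit

theorem qft_i_hermitian_symmetry_general (x : ℝ → ℍ[ℝ])
    (hval : ∀ t, (x t).imJ = 0 ∧ (x t).imK = 0)
    (X : ℝ → ℍ[ℝ])
    (hX : ∀ ν, X ν = ∫ t, x t * qexp (-(qj * ((2 * Real.pi * ν * t : ℝ) : ℍ[ℝ])))) :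
    ∀ ν, X (-ν) = -(qi * X ν * qi) := by
  intro ν
  have hqi : IsUnit qi := qi_ne_zero.isUnit
  have conj_integrand (t : ℝ) :
      qi * (x t * qexp (-(qj * ((2 * Real.pi * ν * t : ℝ) : ℍ[ℝ])))) * qi⁻¹ =
        x t * qexp (-(qj * ((2 * Real.pi * -ν * t : ℝ) : ℍ[ℝ]))) := by
    rw [← mul_assoc, (commute_qi_of_imJ_of_imK (hval t).1 (hval t).2).eq, mul_assoc, mul_assoc,
      ← mul_assoc qi, qi_mul_qexp_neg_qj_mul_inv]
    simp only [mul_neg, neg_mul]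
  calc X (-ν)
      = ∫ t, qi * (x t * qexp (-(qj * ((2 * Real.pi * ν * t : ℝ) : ℍ[ℝ])))) * qi⁻¹ := by
        simp only [hX, conj_integrand]
    _ = qi * X ν * qi⁻¹ := by
        rw [integral_mul_const_of_isUnit hqi.inv, integral_const_mul_of_isUnit hqi, hX]
    _ = -(qi * X ν * qi) := by rw [inv_qi, mul_neg]

/-- i-Hermitian symmetry of the QFT of a `ℂᵢ`-valued signal: `X(−ν) = −i·X(ν)·i`. -/
theorem qft_i_hermitian_symmetry (x : ℝ → ℍ[ℝ]) (hx : Integrable x)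
    (hval : ∀ t, (x t).imJ = 0 ∧ (x t).imK = 0)
    (X : ℝ → ℍ[ℝ])
    (hX : ∀ ν, X ν = ∫ t, x t * qexp (-(qj * ((2 * Real.pi * ν * t : ℝ) : ℍ[ℝ])))) :
    ∀ ν, X (-ν) = -(qi * X ν * qi) :=
  qft_i_hermitian_symmetry_general x hval X hX
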